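/- arXiv:1709.08453 — 8 statements merged into one kernel-verified Lean document; each statement's English description precedes it below -/
import Mathlib

section
/- Let n ≥ 2, let q be a prime power, and let U be a cyclic subgroup of GL_n(F_q) whose order is coprime to q. Assume U acts irreducibly on (F_q)^n, meaning that the only U-invariant F_q-subspaces of (F_q)^n are the zero subspace and the whole space. Then the centralizer of U in GL_n(F_q) is cyclic of order q^n − 1. -/
set_option synthInstance.maxHeartbeats 1000000 in
set_option maxHeartbeats 2000000 in
/-- The centralizer of an irreducible cyclic subgroup of `GL_n(F_q)` of order coprime to `q`
is cyclic of order `q^n - 1`. -/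
theorem stmt_2 (n : ℕ) (hn : 2 ≤ n) (q : ℕ) (hq : IsPrimePow q)
    (F : Type*) [Field F] [Fintype F] (hF : Fintype.card F = q)
    (U : Subgroup (Matrix.GeneralLinearGroup (Fin n) F))
    (hcyc : IsCyclic U) (hcop : Nat.Coprime (Nat.card U) q)
    (hirr : ∀ W : Submodule F (Fin n → F),
      (∀ u : Matrix.GeneralLinearGroup (Fin n) F, u ∈ U →
        ∀ v ∈ W, Matrix.mulVec (u : Matrix (Fin n) (Fin n) F) v ∈ W) →
      W = ⊥ ∨ W = ⊤) :
    IsCyclic (Subgroup.centralizer (U : Set (Matrix.GeneralLinearGroup (Fin n) F))) ∧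
      Nat.card (Subgroup.centralizer (U : Set (Matrix.GeneralLinearGroup (Fin n) F))) =
        q ^ n - 1 := by
  classical
  haveI : NeZero n := ⟨by omega⟩
  set T : Set (Matrix (Fin n) (Fin n) F) := (fun u : (Matrix.GeneralLinearGroup (Fin n) F) => (u : (Matrix (Fin n) (Fin n) F))) '' (U : Set (Matrix.GeneralLinearGroup (Fin n) F)) with hT
  set S : Subalgebra F (Matrix (Fin n) (Fin n) F) := Subalgebra.centralizer F T with hS
  have mem_S_iff : ∀ m : (Matrix (Fin n) (Fin n) F), m ∈ S ↔ ∀ u : (Matrix.GeneralLinearGroup (Fin n) F), u ∈ U → (u : (Matrix (Fin n) (Fin n) F)) * m = m * (u : (Matrix (Fin n) (Fin n) F)) := by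
    intro m
    rw [hS, Subalgebra.mem_centralizer_iff]
    constructor
    · intro h u hu
      exact h _ ⟨u, hu, rfl⟩
    · rintro h t ⟨u, hu, rfl⟩
      exact h u hu
  -- elements of U (as matrices) belong to S, since U is abelian
  obtain ⟨⟨g, hgU⟩, hg⟩ := hcyc.exists_generator
  have hUS : ∀ u : (Matrix.GeneralLinearGroup (Fin n) F), u ∈ U → (u : (Matrix (Fin n) (Fin n) F)) ∈ S := by
    intro u hu
    rw [mem_S_iff]
    intro u' hu'
    obtain ⟨k, hk⟩ := hg ⟨u, hu⟩
    obtain ⟨k', hk'⟩ := hg ⟨u', hu'⟩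
    have hu1 : g ^ k = u := congrArg Subtype.val hk
    have hu2 : g ^ k' = u' := congrArg Subtype.val hk'
    have hcomm : u' * u = u * u' := by
      rw [← hu1, ← hu2]
      exact (Commute.zpow_zpow (Commute.refl g) k' k)
    exact congrArg Units.val hcomm
  -- nonzero elements of S are invertible matrices (Schur)
  have hunit : ∀ m : (Matrix (Fin n) (Fin n) F), m ∈ S → m ≠ 0 → IsUnit m := by
    intro m hm hm0
    set W : Submodule F (Fin n → F) := LinearMap.ker m.mulVecLin with hW
    have hWinv : ∀ u : (Matrix.GeneralLinearGroup (Fin n) F), u ∈ U → ∀ v ∈ W, Matrix.mulVec (u : (Matrix (Fin n) (Fin n) F)) v ∈ W := by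
      intro u hu v hv
      have hv0 : m.mulVec v = 0 := hv
      have hcomm := (mem_S_iff m).1 hm u hu
      show m.mulVec ((u : (Matrix (Fin n) (Fin n) F)).mulVec v) = 0
      rw [Matrix.mulVec_mulVec, ← hcomm, ← Matrix.mulVec_mulVec, hv0, Matrix.mulVec_zero]
    rcases hirr W hWinv with hbot | htop
    · have : Function.Injective m.mulVec := by
        have := LinearMap.ker_eq_bot.mp hbot
        exact this
      exact Matrix.mulVec_injective_iff_isUnit.mp this
    · exfalso
      apply hm0
      ext i j
      have : (Pi.single j 1 : Fin n → F) ∈ W := htop ▸ Submodule.mem_top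
      have h0 : m.mulVec (Pi.single j 1) = 0 := this
      have := congrFun h0 i
      rw [Matrix.mulVec_single] at this
      simpa using this
  -- S is a finite field
  haveI : Nontrivial S := ⟨⟨1, 0, fun h => one_ne_zero (congrArg Subtype.val h)⟩⟩
  haveI : NoZeroDivisors S := by
    constructor
    intro a b hab
    by_cases ha : a = 0
    · exact Or.inl ha
    · right
      have ha' : (a : (Matrix (Fin n) (Fin n) F)) ≠ 0 := fun h => ha (Subtype.ext h)
      have hau := hunit (a : (Matrix (Fin n) (Fin n) F)) a.2 ha'
      have : (a : (Matrix (Fin n) (Fin n) F)) * (b : (Matrix (Fin n) (Fin n) F)) = 0 := congrArg Subtype.val hab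
      have hb : (b : (Matrix (Fin n) (Fin n) F)) = 0 := by
        obtain ⟨e, he⟩ := hau
        have h1 : ((e⁻¹ : (Matrix (Fin n) (Fin n) F)ˣ) : (Matrix (Fin n) (Fin n) F)) *
            ((a : (Matrix (Fin n) (Fin n) F)) * (b : (Matrix (Fin n) (Fin n) F))) =
            ((e⁻¹ : (Matrix (Fin n) (Fin n) F)ˣ) : (Matrix (Fin n) (Fin n) F)) * 0 := by rw [this]
        rwa [← he, ← mul_assoc, Units.inv_mul, one_mul, mul_zero] at h1
      exact Subtype.ext hb
  haveI : IsDomain S := NoZeroDivisors.to_isDomain S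
  haveI : Fintype S := Fintype.ofFinite S
  -- The vector space F^n is a 1-dimensional S-module: build a linear equivalence S ≃ F^n
  set v : Fin n → F := Pi.single 0 1 with hv
  have hvne : v ≠ 0 := by
    intro h
    have := congrFun h 0
    rw [hv, Pi.single_eq_same] at this
    exact one_ne_zero this
  set lin : S →ₗ[F] (Fin n → F) :=
    { toFun := fun s => (s : (Matrix (Fin n) (Fin n) F)).mulVec v
      map_add' := by intro a b; simp [Matrix.add_mulVec]
      map_smul' := by intro a s; simp [Matrix.smul_mulVec] } with hlin
  have hlin1 : lin 1 = v := by
    show ((1 : S) : (Matrix (Fin n) (Fin n) F)).mulVec v = v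
    rw [OneMemClass.coe_one, Matrix.one_mulVec]
  have hlininj : Function.Injective lin := by
    rw [injective_iff_map_eq_zero]
    intro s hs
    by_contra hs0
    have hs' : (s : (Matrix (Fin n) (Fin n) F)) ≠ 0 := fun h => hs0 (Subtype.ext h)
    have hu := hunit (s : (Matrix (Fin n) (Fin n) F)) s.2 hs'
    have hinj := Matrix.mulVec_injective_iff_isUnit.mpr hu
    have : (s : (Matrix (Fin n) (Fin n) F)).mulVec v = (s : (Matrix (Fin n) (Fin n) F)).mulVec 0 := by
      rw [Matrix.mulVec_zero]; exact hs
    exact hvne (hinj this)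
  have hlinsurj : Function.Surjective lin := by
    rw [← LinearMap.range_eq_top]
    have hstab : ∀ u : (Matrix.GeneralLinearGroup (Fin n) F), u ∈ U →
        ∀ w ∈ LinearMap.range lin, Matrix.mulVec (u : (Matrix (Fin n) (Fin n) F)) w ∈
          LinearMap.range lin := by
      rintro u hu w ⟨s, rfl⟩
      refine ⟨⟨(u : (Matrix (Fin n) (Fin n) F)) * (s : (Matrix (Fin n) (Fin n) F)), mul_mem (hUS u hu) s.2⟩, ?_⟩
      exact (Matrix.mulVec_mulVec v (u : (Matrix (Fin n) (Fin n) F)) (s : (Matrix (Fin n) (Fin n) F))).symm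
    rcases hirr (LinearMap.range lin) hstab with hbot | htop
    · exfalso
      apply hvne
      have : lin 1 ∈ LinearMap.range lin := LinearMap.mem_range_self _ _
      rw [hbot, Submodule.mem_bot] at this
      rwa [hlin1] at this
    · exact htop
  have hcardS : Nat.card S = q ^ n := by
    have e := LinearEquiv.ofBijective lin ⟨hlininj, hlinsurj⟩
    rw [Nat.card_congr e.toEquiv]
    simp [Nat.card_eq_fintype_card, hF]
  letI : DivisionRing S := Fintype.divisionRingOfIsDomain S
  letI : Field S := littleWedderburn S
  -- the group centralizer corresponds to units of S
  have memC_iff : ∀ c : (Matrix.GeneralLinearGroup (Fin n) F), c ∈ Subgroup.centralizer (U : Set (Matrix.GeneralLinearGroup (Fin n) F)) ↔ (c : (Matrix (Fin n) (Fin n) F)) ∈ S := by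
    intro c
    rw [Subgroup.mem_centralizer_iff, mem_S_iff]
    constructor
    · intro h u hu
      have := h u hu
      exact congrArg Units.val this
    · intro h u hu
      exact Units.ext (h u hu)
  set C := Subgroup.centralizer (U : Set (Matrix.GeneralLinearGroup (Fin n) F)) with hC
  -- build the multiplicative equivalence C ≃* Sˣ
  have e : C ≃* (S)ˣ := by
    refine
      { toFun := fun c =>
          ⟨⟨((c : (Matrix.GeneralLinearGroup (Fin n) F)) : (Matrix (Fin n) (Fin n) F)), (memC_iff _).1 c.2⟩,
           ⟨(((c : (Matrix.GeneralLinearGroup (Fin n) F))⁻¹ : (Matrix.GeneralLinearGroup (Fin n) F)) : (Matrix (Fin n) (Fin n) F)), (memC_iff _).1 (C.inv_mem c.2)⟩,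
           Subtype.ext ((c : (Matrix.GeneralLinearGroup (Fin n) F)).mul_inv),
           Subtype.ext ((c : (Matrix.GeneralLinearGroup (Fin n) F)).inv_mul)⟩
        invFun := fun x =>
          ⟨⟨((x : S) : (Matrix (Fin n) (Fin n) F)), (((x⁻¹ : Sˣ) : S) : (Matrix (Fin n) (Fin n) F)),
            congrArg Subtype.val x.mul_inv, congrArg Subtype.val x.inv_mul⟩,
           (memC_iff _).2 (x : S).2⟩
        left_inv := fun c => Subtype.ext (Units.ext rfl)
        right_inv := fun x => Units.ext (Subtype.ext rfl)
        map_mul' := fun c c' => Units.ext (Subtype.ext rfl) }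
  constructor
  · exact isCyclic_of_surjective e.symm e.symm.surjective
  · rw [Nat.card_congr e.toEquiv, Nat.card_units, hcardS]
end

section
/- Let n ≥ 2, let q be a prime power, and let p be a primitive prime divisor of q^n − 1, i.e. p divides q^n − 1 but p does not divide q^k − 1 for any k with 1 ≤ k < n. Then every subgroup of GL_n(F_q) of order p acts irreducibly on (F_q)^n (the only invariant subspaces are 0 and the whole space), and any two subgroups of GL_n(F_q) of order p are conjugate in GL_n(F_q). -/
/-!
Since `p ∤ q` and `p ∤ q ^ k - 1` for `k < n`, the prime `p` does not divide
`|GL_d(F_q)| = ∏_{i < d} q ^ i (q ^ (d - i) - 1)` for `d < n`, so an element of `p`-power order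
acts trivially on every space of dimension `< n`. Such an element is semisimple, because
`X ^ p ^ k - 1` is separable over `F_q`; an invariant subspace then has an invariant complement,
and if both were proper the element would act trivially on both, i.e. be `1`. Hence every
nontrivial `p`-element `z` of `GL_n(F_q)` acts irreducibly. By Schur's lemma and Wedderburn's
theorem the algebra of endomorphisms commuting with `z` is a finite field, so the centralizer
of `z` is cyclic. Choosing `z` central in a Sylow `p`-subgroup shows that the Sylow
`p`-subgroups are cyclic; a cyclic group has only one subgroup of order `p`, so the conjugacy of
Sylow subgroups gives the conjugacy of subgroups of order `p`.
-/

open Module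

theorem eq_one_of_pow_prime_pow_eq_one_of_not_dvd_natCard {G : Type*} [Group G] {p k : ℕ}
    (hp : p.Prime) (hpG : ¬ p ∣ Nat.card G) {g : G} (hg : g ^ p ^ k = 1) : g = 1 := by
  have hcop : (p ^ k).Coprime (Nat.card G) := (hp.coprime_iff_not_dvd.mpr hpG).pow_left k
  exact orderOf_eq_one_iff.mp <|
    Nat.eq_one_of_dvd_coprimes hcop (orderOf_dvd_of_pow_eq_one hg) (orderOf_dvd_natCard g)

theorem IsCyclic.subgroup_eq_of_natCard_eq {G : Type*} [Group G] [Finite G] [IsCyclic G]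
    {H K : Subgroup G} (h : Nat.card H = Nat.card K) : H = K := by
  classical
  have := Fintype.ofFinite G
  suffices key : ∀ L : Subgroup G, Nat.card L = Nat.card H →
      (L : Set G).toFinset = ({x | x ^ Nat.card H = 1} : Finset G) by
    exact SetLike.coe_injective <| Set.toFinset_inj.mp <| (key H rfl).trans (key K h.symm).symm
  intro L hL
  refine Finset.eq_of_subset_of_card_le (fun x hx => ?_) ?_
  · rw [Set.mem_toFinset] at hx
    rw [Finset.mem_filter, ← hL, ← orderOf_dvd_iff_pow_eq_one]
    exact ⟨Finset.mem_univ x, Subgroup.orderOf_dvd_natCard L hx⟩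
  · rw [Set.toFinset_card, ← Nat.card_eq_fintype_card]
    exact (IsCyclic.card_pow_eq_one_le Nat.card_pos).trans_eq hL.symm

theorem Subgroup.eq_of_natCard_eq_of_le {G : Type*} [Group G] {P H K : Subgroup G} [Finite P]
    [IsCyclic P] (hH : H ≤ P) (hK : K ≤ P) (h : Nat.card H = Nat.card K) : H = K := by
  have key := IsCyclic.subgroup_eq_of_natCard_eq (H := H.subgroupOf P) (K := K.subgroupOf P)
    (by rwa [Nat.card_congr (Subgroup.subgroupOfEquivOfLe hH).toEquiv,
      Nat.card_congr (Subgroup.subgroupOfEquivOfLe hK).toEquiv])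
  rwa [Subgroup.subgroupOf_inj, inf_eq_left.mpr hH, inf_eq_left.mpr hK] at key

theorem exists_map_conj_eq_of_isCyclic_sylow {G : Type*} [Group G] [Finite G] {p : ℕ}
    [Fact p.Prime] (hcyc : ∀ P : Sylow p G, IsCyclic P) {U₁ U₂ : Subgroup G}
    (hU₁ : IsPGroup p U₁) (hU₂ : IsPGroup p U₂) (h : Nat.card U₁ = Nat.card U₂) :
    ∃ g : G, U₁.map (MulAut.conj g).toMonoidHom = U₂ := by
  obtain ⟨P₁, hle₁⟩ := hU₁.exists_le_sylow
  obtain ⟨P₂, hle₂⟩ := hU₂.exists_le_sylow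
  obtain ⟨g, rfl⟩ := MulAction.exists_smul_eq G P₁ P₂
  refine ⟨g, ?_⟩
  have := hcyc (g • P₁)
  refine Subgroup.eq_of_natCard_eq_of_le (P := ((g • P₁ : Sylow p G) : Subgroup G)) ?_ hle₂ ?_
  · rw [Sylow.coe_subgroup_smul, Subgroup.pointwise_smul_def]
    exact Subgroup.map_mono hle₁
  · rw [← h]
    exact Nat.card_congr
      (Subgroup.equivMapOfInjective U₁ _ (MulAut.conj g).injective).symm.toEquiv

theorem Module.End.isSemisimple_of_pow_eq_one {K V : Type*} [Field K] [AddCommGroup V]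
    [Module K V] {m : ℕ} (hm : (m : K) ≠ 0) {f : End K V} (hf : f ^ m = 1) : f.IsSemisimple :=
  isSemisimple_of_squarefree_aeval_eq_zero
    (Polynomial.separable_X_pow_sub_C 1 hm one_ne_zero).squarefree (by simp [hf])

section Schur

variable {F V : Type*} [Field F] [AddCommGroup V] [Module F V]

theorem Module.End.injective_of_mem_centralizer {z c : End F V}
    (hz : ∀ W ∈ z.invtSubmodule, W = ⊥ ∨ W = ⊤)
    (hc : c ∈ Subalgebra.centralizer F {z}) (hc0 : c ≠ 0) : Function.Injective c := by
  have hcomm : z * c = c * z := Subalgebra.mem_centralizer_iff F |>.mp hc z rfl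
  have hker : LinearMap.ker c ∈ z.invtSubmodule := fun v (hv : c v = 0) => by
    change c (z v) = 0
    rw [← Module.End.mul_apply, ← hcomm, Module.End.mul_apply, hv, map_zero]
  rcases hz _ hker with h | h
  · exact LinearMap.ker_eq_bot.mp h
  · exact absurd (LinearMap.ker_eq_top.mp h) hc0

theorem Module.End.isCyclic_centralizer [Finite F] [FiniteDimensional F V] [Nontrivial V]
    (u : (End F V)ˣ) (hu : ∀ W ∈ (u : End F V).invtSubmodule, W = ⊥ ∨ W = ⊤) :
    IsCyclic (Subgroup.centralizer {u}) := by
  have : Finite (End F V) := Module.finite_of_finite F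
  let C := Subalgebra.centralizer F {(u : End F V)}
  have : NoZeroDivisors C := ⟨fun {a b} hab => or_iff_not_imp_left.mpr fun ha => by
    refine Subtype.ext (LinearMap.ext fun v => injective_of_mem_centralizer hu a.2
      (fun h => ha (Subtype.ext h)) ?_)
    simpa using LinearMap.congr_fun (congrArg Subtype.val hab) v⟩
  have : IsDomain C := NoZeroDivisors.to_isDomain C
  let : Field C := (Finite.isDomain_to_isField C).toField
  let φ : Subgroup.centralizer {u} →* C :=
    { toFun g := ⟨g.1.1, Subalgebra.mem_centralizer_iff F |>.mpr fun z hz => by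
        rw [Set.mem_singleton_iff.mp hz]
        exact congrArg Units.val (Subgroup.mem_centralizer_iff.mp g.2 u rfl)⟩
      map_one' := rfl
      map_mul' _ _ := rfl }
  refine isCyclic_of_injective_ringHom φ fun g h hgh => Subtype.ext (Units.ext ?_)
  exact congrArg Subtype.val hgh

end Schur

section PrimitivePrimeDivisor

variable {F : Type*} [Field F] [Fintype F] {p : ℕ}

theorem FiniteField.natCast_ne_zero_of_not_dvd_card (hp : p.Prime)
    (hpq : ¬ p ∣ Fintype.card F) : (p : F) ≠ 0 := by
  intro h
  have hchar : ringChar F = p :=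
    (Nat.prime_dvd_prime_iff_eq (CharP.char_is_prime F (ringChar F)) hp).mp
      ((CharP.cast_eq_zero_iff F (ringChar F) p).mp h)
  exact hpq (hchar ▸ (CharP.cast_eq_zero_iff F _ _).mp (FiniteField.cast_card_eq_zero F))

theorem Matrix.GeneralLinearGroup.not_dvd_natCard (hp : p.Prime)
    (hpq : ¬ p ∣ Fintype.card F) {d : ℕ}
    (hprim : ∀ k, 1 ≤ k → k ≤ d → ¬ p ∣ Fintype.card F ^ k - 1) :
    ¬ p ∣ Nat.card (GL (Fin d) F) := by
  rw [Matrix.card_GL_field]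
  intro h
  obtain ⟨i, -, hi⟩ := hp.prime.exists_mem_finset_dvd h
  have hfactor : Fintype.card F ^ d - Fintype.card F ^ (i : ℕ) =
      Fintype.card F ^ (i : ℕ) * (Fintype.card F ^ (d - i) - 1) := by
    rw [Nat.mul_sub, mul_one, ← pow_add, Nat.add_sub_cancel' i.2.le]
  rw [hfactor] at hi
  rcases hp.dvd_mul.mp hi with hi | hi
  · exact hpq (hp.dvd_of_dvd_pow hi)
  · exact hprim (d - i) (by omega) (by omega) hi

variable {V : Type*} [AddCommGroup V] [Module F V] [FiniteDimensional F V]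

theorem Module.End.eq_one_of_pow_prime_pow_eq_one (hp : p.Prime) (hpq : ¬ p ∣ Fintype.card F)
    (hprim : ∀ k, 1 ≤ k → k ≤ finrank F V → ¬ p ∣ Fintype.card F ^ k - 1)
    {f : End F V} {k : ℕ} (hf : f ^ p ^ k = 1) : f = 1 := by
  have hcard : Nat.card (LinearMap.GeneralLinearGroup F V) =
      Nat.card (GL (Fin (finrank F V)) F) :=
    Nat.card_congr (Matrix.GeneralLinearGroup.toLin' (finBasis F V)).symm.toEquiv
  exact congrArg Units.val <| eq_one_of_pow_prime_pow_eq_one_of_not_dvd_natCard hp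
    (hcard ▸ Matrix.GeneralLinearGroup.not_dvd_natCard hp hpq hprim)
    (Units.pow_ofPowEqOne hf (pow_ne_zero k hp.ne_zero))

theorem Module.End.eq_bot_or_eq_top_of_pow_prime_pow_eq_one (hp : p.Prime)
    (hpq : ¬ p ∣ Fintype.card F)
    (hprim : ∀ k, 1 ≤ k → k < finrank F V → ¬ p ∣ Fintype.card F ^ k - 1)
    {f : End F V} {k : ℕ} (hf : f ^ p ^ k = 1) (hf1 : f ≠ 1)
    {W : Submodule F V} (hW : W ∈ f.invtSubmodule) : W = ⊥ ∨ W = ⊤ := by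
  have hpk : ((p ^ k : ℕ) : F) ≠ 0 := by
    push_cast
    exact pow_ne_zero k (FiniteField.natCast_ne_zero_of_not_dvd_card hp hpq)
  obtain ⟨W', hW', hcompl⟩ := isSemisimple_iff.mp (isSemisimple_of_pow_eq_one hpk hf) W hW
  have eqOn_one : ∀ U : Submodule F V, (∀ x ∈ U, f x ∈ U) → U ≠ ⊤ →
      Set.EqOn f (1 : End F V) U := by
    intro U hU hUtop v hv
    have hlt : finrank F U < finrank F V := Submodule.finrank_lt hUtop
    have hres : f.restrict hU = 1 :=
      eq_one_of_pow_prime_pow_eq_one hp hpq (fun j hj hjU => hprim j hj (by omega)) (k := k)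
        (by rw [Module.End.pow_restrict]; ext x; simp [hf])
    exact congrArg Subtype.val (LinearMap.congr_fun hres ⟨v, hv⟩)
  by_contra! hne
  exact hf1 <| LinearMap.ext_on_codisjoint hcompl.codisjoint (eqOn_one W hW hne.2)
    (eqOn_one W' hW' fun h => hne.1 (eq_bot_of_isCompl_top (h ▸ hcompl)))

theorem IsPGroup.isCyclic_of_not_dvd_pow_sub_one [Nontrivial V] (hp : p.Prime)
    (hpq : ¬ p ∣ Fintype.card F)
    (hprim : ∀ k, 1 ≤ k → k < finrank F V → ¬ p ∣ Fintype.card F ^ k - 1)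
    {P : Subgroup (End F V)ˣ} (hP : IsPGroup p P) : IsCyclic P := by
  have : Finite (End F V) := Module.finite_of_finite F
  have := Fact.mk hp
  rcases subsingleton_or_nontrivial P with hP1 | hP1
  · exact isCyclic_of_subsingleton
  have := hP.center_nontrivial
  obtain ⟨z, hz1⟩ := exists_ne (1 : Subgroup.center P)
  let u : (End F V)ˣ := (z : P)
  have hu1 : (u : End F V) ≠ 1 := fun h => hz1 (Subtype.ext (Subtype.ext (Units.ext h)))
  obtain ⟨k, hk⟩ := hP z
  have hirr : ∀ W ∈ (u : End F V).invtSubmodule, W = ⊥ ∨ W = ⊤ := fun W hW =>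
    Module.End.eq_bot_or_eq_top_of_pow_prime_pow_eq_one hp hpq hprim (k := k)
      (by simpa using congrArg (fun y : P => ((y : (End F V)ˣ) : End F V)) hk) hu1 hW
  have hle : P ≤ Subgroup.centralizer {u} := fun y hy => by
    rw [Subgroup.mem_centralizer_singleton_iff]
    exact congrArg Subtype.val (Subgroup.mem_center_iff.mp z.2 ⟨y, hy⟩)
  have := Module.End.isCyclic_centralizer u hirr
  exact Subgroup.isCyclic_of_le hle

end PrimitivePrimeDivisor

theorem stmt_3_general (n : ℕ) (hn : 2 ≤ n) (q : ℕ)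
    (F : Type*) [Field F] [Fintype F] (hF : Fintype.card F = q)
    (p : ℕ) (hp : p.Prime) (hdvd : p ∣ q ^ n - 1)
    (hprim : ∀ k : ℕ, 1 ≤ k → k < n → ¬ p ∣ q ^ k - 1) :
    (∀ U : Subgroup (Matrix.GeneralLinearGroup (Fin n) F), Nat.card U = p →
      ∀ W : Submodule F (Fin n → F),
        (∀ u : Matrix.GeneralLinearGroup (Fin n) F, u ∈ U →
          ∀ v ∈ W, Matrix.mulVec (u : Matrix (Fin n) (Fin n) F) v ∈ W) →
        W = ⊥ ∨ W = ⊤) ∧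
    (∀ U₁ U₂ : Subgroup (Matrix.GeneralLinearGroup (Fin n) F),
      Nat.card U₁ = p → Nat.card U₂ = p →
      ∃ g : Matrix.GeneralLinearGroup (Fin n) F,
        Subgroup.map (MulAut.conj g).toMonoidHom U₁ = U₂) := by
  subst hF
  have := Fact.mk hp
  have : NeZero n := ⟨by omega⟩
  have hpq : ¬ p ∣ Fintype.card F := fun h => hp.not_dvd_one <| by
    have := Nat.dvd_sub (dvd_pow (n := n) h (by omega)) hdvd
    rwa [Nat.sub_sub_self (Nat.one_le_pow _ _ Fintype.card_pos)] at this
  have hprim' :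
      ∀ k, 1 ≤ k → k < finrank F (Fin n → F) → ¬ p ∣ Fintype.card F ^ k - 1 := by
    rwa [finrank_fin_fun]
  let toLin := (Matrix.GeneralLinearGroup.toLin (n := Fin n) (R := F)).toMonoidHom
  refine ⟨fun U hU W hW => ?_, fun U₁ U₂ h₁ h₂ => ?_⟩
  · obtain ⟨x, hx⟩ := exists_prime_orderOf_dvd_card' (G := U) p (hU ▸ dvd_rfl)
    obtain ⟨hxp, hx1⟩ := orderOf_eq_prime_iff.mp <|
      (orderOf_injective toLin Matrix.GeneralLinearGroup.toLin.injective x).trans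
        ((Subgroup.orderOf_coe x).trans hx)
    refine Module.End.eq_bot_or_eq_top_of_pow_prime_pow_eq_one hp hpq hprim' (k := 1)
      (by simpa using congrArg Units.val hxp) (fun h => hx1 (Units.ext h)) fun v hv => ?_
    exact hW x x.2 v hv
  · have hcyc (P : Sylow p (GL (Fin n) F)) : IsCyclic P :=
      let e := P.equivMapOfInjective toLin Matrix.GeneralLinearGroup.toLin.injective
      have := (P.2.map toLin).isCyclic_of_not_dvd_pow_sub_one hp hpq hprim'
      isCyclic_of_injective e.toMonoidHom e.injective
    exact exists_map_conj_eq_of_isCyclic_sylow hcyc (IsPGroup.of_card (by rw [h₁, pow_one]))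
      (IsPGroup.of_card (by rw [h₂, pow_one])) (h₁.trans h₂.symm)

/-- For a primitive prime divisor `p` of `q^n - 1`, every subgroup of order `p` of
`GL_n(F_q)` acts irreducibly on `(F_q)^n`, and all such subgroups are conjugate. -/
theorem stmt_3 (n : ℕ) (hn : 2 ≤ n) (q : ℕ) (hq : IsPrimePow q)
    (F : Type*) [Field F] [Fintype F] (hF : Fintype.card F = q)
    (p : ℕ) (hp : p.Prime) (hdvd : p ∣ q ^ n - 1)
    (hprim : ∀ k : ℕ, 1 ≤ k → k < n → ¬ p ∣ q ^ k - 1) :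
    (∀ U : Subgroup (Matrix.GeneralLinearGroup (Fin n) F), Nat.card U = p →
      ∀ W : Submodule F (Fin n → F),
        (∀ u : Matrix.GeneralLinearGroup (Fin n) F, u ∈ U →
          ∀ v ∈ W, Matrix.mulVec (u : Matrix (Fin n) (Fin n) F) v ∈ W) →
        W = ⊥ ∨ W = ⊤) ∧
    (∀ U₁ U₂ : Subgroup (Matrix.GeneralLinearGroup (Fin n) F),
      Nat.card U₁ = p → Nat.card U₂ = p →
      ∃ g : Matrix.GeneralLinearGroup (Fin n) F,
        Subgroup.map (MulAut.conj g).toMonoidHom U₁ = U₂) :=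
  stmt_3_general n hn q F hF p hp hdvd hprim
end

section
/- Let n ≥ 2, let q be a prime power, and let p be a primitive prime divisor of q^n − 1, i.e. p divides q^n − 1 but p does not divide q^k − 1 for any k with 1 ≤ k < n. Then for every subgroup U of GL_n(F_q) of order p, the centralizer of U in GL_n(F_q) is cyclic of order q^n − 1. -/
/-! A non-identity element `u` of `U` is a matrix of order `p`. Since `p` is a primitive prime
divisor of `q ^ n - 1`, every irreducible factor of the cyclotomic polynomial `Φ_p` over `𝔽_q` has
degree at least `n`; the minimal polynomial of `u`, which divides `(X - 1) Φ_p`, is not `X - 1` and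
has degree at most `n`, is therefore irreducible of degree `n`. So `K = 𝔽_q[u]` is a field with
`q ^ n` elements and `𝔽_q ^ n` is one-dimensional over `K`: a matrix commuting with `u` is
`K`-linear, hence multiplication by an element of `K`. The centralizer of `U` is thus `Kˣ`. -/

open Polynomial Matrix

theorem Subgroup.exists_centralizer_eq_centralizer_singleton {G : Type*} [Group G]
    {U : Subgroup G} {p : ℕ} [hp : Fact p.Prime] (hU : Nat.card U = p) :
    ∃ u : G, u ^ p = 1 ∧ u ≠ 1 ∧ centralizer (U : Set G) = centralizer {u} := by
  have : Finite U := Nat.finite_of_card_ne_zero (hU ▸ hp.out.ne_zero)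
  have : Nontrivial U := Finite.one_lt_card_iff_nontrivial.mp (hU ▸ hp.out.one_lt)
  obtain ⟨⟨x, hxU⟩, hx⟩ := exists_ne (1 : U)
  have hxp : x ^ p = 1 := by
    have := congrArg Subtype.val (pow_card_eq_one' (x := (⟨x, hxU⟩ : U)))
    rwa [hU, coe_pow, coe_one] at this
  have hx1 : x ≠ 1 := by simpa using hx
  have hUx : zpowers x = U := eq_of_le_of_card_ge (zpowers_le.mpr hxU)
    (by rw [hU, Nat.card_zpowers, orderOf_eq_prime hxp hx1])
  exact ⟨x, hxp, hx1, by rw [← hUx, zpowers_eq_closure, centralizer_closure]⟩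

section FiniteField

variable {F : Type*} [Field F] [Fintype F]

theorem natCast_ne_zero_of_dvd_card_pow_sub_one {p n : ℕ} (hn : n ≠ 0)
    (h : p ∣ Fintype.card F ^ n - 1) : (p : F) ≠ 0 := by
  intro hp
  have h' := Nat.cast_dvd_cast (α := F) h
  rw [hp, zero_dvd_iff, Nat.cast_sub (Nat.one_le_pow _ _ Fintype.card_pos), Nat.cast_pow,
    FiniteField.cast_card_eq_zero, zero_pow hn, Nat.cast_one, zero_sub, neg_eq_zero] at h'
  exact one_ne_zero h'

theorem natCard_adjoinRoot {f : F[X]} (hf : f ≠ 0) :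
    Nat.card (AdjoinRoot f) = Fintype.card F ^ f.natDegree := by
  have := (AdjoinRoot.powerBasis hf).finite
  rw [Module.natCard_eq_pow_finrank (K := F), (AdjoinRoot.powerBasis hf).finrank,
    AdjoinRoot.powerBasis_dim, Nat.card_eq_fintype_card]

theorem dvd_card_pow_natDegree_sub_one_of_dvd_cyclotomic {p : ℕ} [NeZero (p : F)] {f : F[X]}
    (hf : Irreducible f) (hdvd : f ∣ cyclotomic p F) :
    p ∣ Fintype.card F ^ f.natDegree - 1 := by
  have := Fact.mk hf
  let K := AdjoinRoot f
  have : Finite K := Nat.finite_of_card_ne_zero <| by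
    rw [natCard_adjoinRoot hf.ne_zero]; positivity
  let : Fintype K := Fintype.ofFinite K
  have : NeZero (p : K) := NeZero.nat_of_injective (algebraMap F K).injective
  have hζ : IsPrimitiveRoot (AdjoinRoot.root f) p := by
    rw [← isRoot_cyclotomic_iff, ← map_cyclotomic p (algebraMap F K), IsRoot,
      eval_map_algebraMap]
    exact aeval_eq_zero_of_dvd_aeval_eq_zero hdvd (by rw [AdjoinRoot.aeval_eq, AdjoinRoot.mk_self])
  rw [← natCard_adjoinRoot hf.ne_zero, Nat.card_eq_fintype_card, ← hζ.pow_eq_one_iff_dvd]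
  exact FiniteField.pow_card_sub_one_eq_one _ (hζ.ne_zero (NeZero.of_neZero_natCast F).out)

theorem irreducible_minpoly_and_natDegree_eq {A : Type*} [Ring A] [Algebra F A] {x : A}
    {p n : ℕ} [Fact p.Prime] [NeZero (p : F)] (hx : x ^ p = 1) (hx1 : x ≠ 1)
    (hdeg : (minpoly F x).natDegree ≤ n)
    (hprim : ∀ k, 1 ≤ k → k < n → ¬ p ∣ Fintype.card F ^ k - 1) :
    Irreducible (minpoly F x) ∧ (minpoly F x).natDegree = n := by
  have hdvd : minpoly F x ∣ cyclotomic p F * (X - 1) := by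
    rw [cyclotomic_prime_mul_X_sub_one]
    exact minpoly.dvd F x (by simp [hx])
  have hμ0 : minpoly F x ≠ 0 :=
    ne_zero_of_dvd_ne_zero (mul_ne_zero (cyclotomic_ne_zero p F) (X_sub_C_ne_zero 1)) hdvd
  have hcop : ¬ IsCoprime (minpoly F x) (cyclotomic p F) := fun h =>
    hx1 <| by simpa [sub_eq_zero] using
      aeval_eq_zero_of_dvd_aeval_eq_zero (h.dvd_of_dvd_mul_left hdvd) (minpoly.aeval F x)
  obtain ⟨f, hf, hfμ, hfΦ⟩ : ∃ f, Irreducible f ∧ f ∣ minpoly F x ∧ f ∣ cyclotomic p F := by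
    by_contra! h
    exact hcop (isCoprime_of_irreducible_dvd (fun h0 => hμ0 h0.1) h)
  have hfn : n ≤ f.natDegree := by
    by_contra! hlt
    exact hprim _ hf.natDegree_pos hlt (dvd_card_pow_natDegree_sub_one_of_dvd_cyclotomic hf hfΦ)
  have hfμ' := natDegree_le_of_dvd hfμ hμ0
  exact ⟨(associated_of_dvd_of_natDegree_le hfμ hμ0 (by omega)).irreducible hf, by omega⟩

end FiniteField

theorem Matrix.natDegree_minpoly_le {ι K : Type*} [Fintype ι] [DecidableEq ι] [Field K]
    (M : Matrix ι ι K) : (minpoly K M).natDegree ≤ Fintype.card ι :=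
  M.charpoly_natDegree_eq_dim ▸ natDegree_le_of_dvd M.minpoly_dvd_charpoly M.charpoly_monic.ne_zero

theorem Matrix.exists_eq_of_forall_commute {ι R K : Type*} [Fintype ι] [DecidableEq ι]
    [CommRing R] [Finite R] [Field K] (ψ : K →+* Matrix ι ι R)
    (hcard : Nat.card K = Nat.card (ι → R)) {A : Matrix ι ι R} (hA : ∀ k, Commute A (ψ k)) :
    ∃ k, ψ k = A := by
  have : Finite K := Nat.finite_of_card_ne_zero (hcard ▸ Nat.card_pos.ne')
  have : Nontrivial (ι → R) := Finite.one_lt_card_iff_nontrivial.mp (hcard ▸ Finite.one_lt_card)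
  obtain ⟨v, hv⟩ := exists_ne (0 : ι → R)
  have hinj : Function.Injective fun k => ψ k *ᵥ v := by
    intro k k' h
    by_contra hne
    apply hv
    have h0 : ψ (k - k') *ᵥ v = 0 := by simpa [map_sub, sub_mulVec, sub_eq_zero] using h
    calc v = ψ ((k - k')⁻¹ * (k - k')) *ᵥ v := by
          rw [inv_mul_cancel₀ (sub_ne_zero.mpr hne), map_one, one_mulVec]
      _ = 0 := by rw [map_mul, ← mulVec_mulVec, h0, mulVec_zero]
  have hbij := hinj.bijective_of_nat_card_le hcard.ge
  obtain ⟨k₀, hk₀⟩ := hbij.2 (A *ᵥ v)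
  refine ⟨k₀, toLin'.injective (LinearMap.ext fun w => ?_)⟩
  obtain ⟨k, rfl⟩ := hbij.2 w
  simp only [toLin'_apply] at hk₀ ⊢
  calc ψ k₀ *ᵥ ψ k *ᵥ v = ψ k *ᵥ ψ k₀ *ᵥ v := by
        rw [mulVec_mulVec, mulVec_mulVec, ← map_mul, ← map_mul, mul_comm]
    _ = A *ᵥ ψ k *ᵥ v := by rw [hk₀, mulVec_mulVec, mulVec_mulVec, (hA k).eq]

section MinpolyLift

variable (F : Type*) {A : Type*} [Field F] [Ring A] [Algebra F A]

noncomputable def minpolyLift (x : A) : AdjoinRoot (minpoly F x) →ₐ[F] A :=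
  Ideal.Quotient.liftₐ _ (aeval x) fun g hg => by
    obtain ⟨c, rfl⟩ := Ideal.mem_span_singleton'.mp hg
    rw [map_mul, minpoly.aeval, mul_zero]

variable {F}

theorem minpolyLift_mk (x : A) (g : F[X]) : minpolyLift F x (AdjoinRoot.mk _ g) = aeval x g :=
  Ideal.Quotient.lift_mk _ _ _

theorem commute_minpolyLift {a x : A} (h : Commute a x) (k : AdjoinRoot (minpoly F x)) :
    Commute a (minpolyLift F x k) := by
  obtain ⟨g, rfl⟩ := AdjoinRoot.mk_surjective k
  rw [minpolyLift_mk]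
  exact Algebra.commute_of_mem_adjoin_singleton_of_commute (aeval_mem_adjoin_singleton F x) h

end MinpolyLift

namespace Matrix.GeneralLinearGroup

variable {ι F : Type*} [Fintype ι] [DecidableEq ι] [Field F] [Fintype F] {u : GL ι F}

theorem range_unitsMap_minpolyLift_eq_centralizer
    (hirr : Irreducible (minpoly F (u : Matrix ι ι F)))
    (hdeg : (minpoly F (u : Matrix ι ι F)).natDegree = Fintype.card ι) :
    (Units.map (minpolyLift F (u : Matrix ι ι F)).toMonoidHom).range =
      Subgroup.centralizer {u} := by
  have := Fact.mk hirr
  have : Nonempty ι := Fintype.card_pos_iff.mp (hdeg ▸ hirr.natDegree_pos)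
  ext g
  rw [Subgroup.mem_centralizer_singleton_iff, MonoidHom.mem_range]
  constructor
  · rintro ⟨k, rfl⟩
    have := (commute_minpolyLift (F := F) (Commute.refl (u : Matrix ι ι F)) k).eq
    exact Units.ext (by simpa using this.symm)
  · intro hg
    obtain ⟨k, hk⟩ := exists_eq_of_forall_commute (minpolyLift F (u : Matrix ι ι F)).toRingHom
      (by rw [natCard_adjoinRoot hirr.ne_zero, hdeg, Nat.card_fun, Nat.card_eq_fintype_card,
        Nat.card_eq_fintype_card])
      (A := g) (commute_minpolyLift (Commute.units_val hg))
    have hk0 : k ≠ 0 := by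
      rintro rfl
      exact g.ne_zero (by simpa using hk.symm)
    exact ⟨Units.mk0 k hk0, Units.ext hk⟩

theorem isCyclic_centralizer_and_natCard_of_irreducible_minpoly
    (hirr : Irreducible (minpoly F (u : Matrix ι ι F)))
    (hdeg : (minpoly F (u : Matrix ι ι F)).natDegree = Fintype.card ι) :
    IsCyclic (Subgroup.centralizer {u}) ∧
      Nat.card (Subgroup.centralizer {u}) = Fintype.card F ^ Fintype.card ι - 1 := by
  have := Fact.mk hirr
  have : Nonempty ι := Fintype.card_pos_iff.mp (hdeg ▸ hirr.natDegree_pos)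
  have : Finite (AdjoinRoot (minpoly F (u : Matrix ι ι F))) := Nat.finite_of_card_ne_zero <| by
    rw [natCard_adjoinRoot hirr.ne_zero]; positivity
  let e := (MonoidHom.ofInjective (Units.map_injective
      (minpolyLift F (u : Matrix ι ι F)).toRingHom.injective)).trans
    (MulEquiv.subgroupCongr (range_unitsMap_minpolyLift_eq_centralizer hirr hdeg))
  exact ⟨isCyclic_of_surjective e.toMonoidHom e.surjective, by
    rw [← Nat.card_congr e.toEquiv, Nat.card_units, natCard_adjoinRoot hirr.ne_zero, hdeg]⟩

end Matrix.GeneralLinearGroup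

theorem stmt_4_general (n : ℕ) (hn : 2 ≤ n) (q : ℕ)
    (F : Type*) [Field F] [Fintype F] (hF : Fintype.card F = q)
    (p : ℕ) (hp : p.Prime) (hdvd : p ∣ q ^ n - 1)
    (hprim : ∀ k : ℕ, 1 ≤ k → k < n → ¬ p ∣ q ^ k - 1)
    (U : Subgroup (Matrix.GeneralLinearGroup (Fin n) F)) (hU : Nat.card U = p) :
    IsCyclic (Subgroup.centralizer (U : Set (Matrix.GeneralLinearGroup (Fin n) F))) ∧
      Nat.card (Subgroup.centralizer (U : Set (Matrix.GeneralLinearGroup (Fin n) F))) =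
        q ^ n - 1 := by
  subst hF
  have := Fact.mk hp
  have : NeZero (p : F) := ⟨natCast_ne_zero_of_dvd_card_pow_sub_one (by omega) hdvd⟩
  obtain ⟨u, hup, hu1, hcent⟩ := Subgroup.exists_centralizer_eq_centralizer_singleton hU
  obtain ⟨hirr, hdeg⟩ := irreducible_minpoly_and_natDegree_eq (x := (u : Matrix (Fin n) (Fin n) F))
    (by rw [← Units.val_pow_eq_pow_val, hup, Units.val_one]) (Units.val_eq_one.not.mpr hu1)
    ((natDegree_minpoly_le _).trans_eq (Fintype.card_fin n)) hprim
  rw [hcent]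
  simpa using GeneralLinearGroup.isCyclic_centralizer_and_natCard_of_irreducible_minpoly hirr
    (hdeg.trans (Fintype.card_fin n).symm)

/-- For a primitive prime divisor `p` of `q^n - 1`, the centralizer of a subgroup of
order `p` in `GL_n(F_q)` is cyclic of order `q^n - 1`. -/
theorem stmt_4 (n : ℕ) (hn : 2 ≤ n) (q : ℕ) (hq : IsPrimePow q)
    (F : Type*) [Field F] [Fintype F] (hF : Fintype.card F = q)
    (p : ℕ) (hp : p.Prime) (hdvd : p ∣ q ^ n - 1)
    (hprim : ∀ k : ℕ, 1 ≤ k → k < n → ¬ p ∣ q ^ k - 1)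
    (U : Subgroup (Matrix.GeneralLinearGroup (Fin n) F)) (hU : Nat.card U = p) :
    IsCyclic (Subgroup.centralizer (U : Set (Matrix.GeneralLinearGroup (Fin n) F))) ∧
      Nat.card (Subgroup.centralizer (U : Set (Matrix.GeneralLinearGroup (Fin n) F))) =
        q ^ n - 1 :=
  stmt_4_general n hn q F hF p hp hdvd hprim U hU
end

section
/- The alternating group A_8 on 8 letters contains no subgroup isomorphic to A_5 × C_2 (the direct product of the alternating group on 5 letters with a cyclic group of order 2), and no subgroup isomorphic to SL_2(F_5), the group of 2×2 matrices of determinant 1 over the field with 5 elements. -/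
/-- Transfer `y ^ n = 1` across the coercion from a subgroup. -/
lemma aux_coe_pow_eq_one {G : Type*} [Group G] {S : Subgroup G} (y : S) (n : ℕ) :
    ((y : G)) ^ n = 1 ↔ y ^ n = 1 := by
  rw [← SubmonoidClass.coe_pow, OneMemClass.coe_eq_one]

/-- Transfer `x ^ n = 1` across a group isomorphism. -/
lemma aux_pow_transfer {G H : Type*} [Group G] [Group H] (e : G ≃* H) (x : H) (n : ℕ) :
    (e.symm x) ^ n = 1 ↔ x ^ n = 1 := by
  rw [← map_pow]
  exact ⟨fun h => by simpa using congrArg e h, fun h => by simp [h]⟩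

/-- `A₈` has no element of order 10. -/
lemma aux_no_order_ten (g : Equiv.Perm (Fin 8)) (hs : Equiv.Perm.sign g = 1)
    (h10 : g ^ 10 = 1) (h2 : g ^ 2 ≠ 1) (h5 : g ^ 5 ≠ 1) : False := by
  have ho : orderOf g = 10 := by
    have hd : orderOf g ∣ 10 := orderOf_dvd_of_pow_eq_one h10
    have hle : orderOf g ≤ 10 := Nat.le_of_dvd (by norm_num) hd
    have e2 : g ^ orderOf g = 1 := pow_orderOf_eq_one g
    interval_cases h : (orderOf g)
    · exact absurd hd (by decide)
    · exact absurd ((orderOf_eq_one_iff.mp h) ▸ (one_pow 2 : (1 : Equiv.Perm (Fin 8)) ^ 2 = 1)) h2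
    · exact absurd e2 h2
    · exact absurd hd (by decide)
    · exact absurd hd (by decide)
    · exact absurd e2 h5
    · exact absurd hd (by decide)
    · exact absurd hd (by decide)
    · exact absurd hd (by decide)
    · exact absurd hd (by decide)
    · rfl
  have hsum : g.cycleType.sum ≤ 8 := by
    rw [Equiv.Perm.sum_cycleType]
    simpa using Finset.card_le_univ g.support
  have hlcm : g.cycleType.lcm = 10 := by rw [Equiv.Perm.lcm_cycleType, ho]
  have hmem : ∀ n ∈ g.cycleType, n = 2 ∨ n = 5 := by
    intro n hn
    have h2' := Equiv.Perm.two_le_of_mem_cycleType hn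
    have hdvd : n ∣ 10 := ho ▸ Equiv.Perm.dvd_of_mem_cycleType hn
    have hle : n ≤ 8 := le_trans (Multiset.le_sum_of_mem hn) hsum
    interval_cases n <;> revert hdvd <;> decide
  have hm2 : (2 : ℕ) ∈ g.cycleType := by
    by_contra h
    have : g.cycleType.lcm ∣ 5 := Multiset.lcm_dvd.mpr (fun a ha => by
      rcases hmem a ha with rfl | rfl
      · exact absurd ha h
      · exact dvd_rfl)
    rw [hlcm] at this; norm_num at this
  have hm5 : (5 : ℕ) ∈ g.cycleType := by
    by_contra h
    have : g.cycleType.lcm ∣ 2 := Multiset.lcm_dvd.mpr (fun a ha => by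
      rcases hmem a ha with rfl | rfl
      · exact dvd_rfl
      · exact absurd ha h)
    rw [hlcm] at this; norm_num at this
  have e1 : g.cycleType = 2 ::ₘ g.cycleType.erase 2 := (Multiset.cons_erase hm2).symm
  have hm5' : (5 : ℕ) ∈ g.cycleType.erase 2 :=
    (Multiset.mem_erase_of_ne (by norm_num)).mpr hm5
  have e2 : g.cycleType.erase 2 = 5 ::ₘ (g.cycleType.erase 2).erase 5 :=
    (Multiset.cons_erase hm5').symm
  set R := (g.cycleType.erase 2).erase 5 with hR
  have hsum' : g.cycleType.sum = 7 + R.sum := by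
    rw [e1, e2]; simp [Multiset.sum_cons]; ring
  have hR0 : R = 0 := by
    by_contra h
    obtain ⟨x, hx⟩ := Multiset.exists_mem_of_ne_zero h
    have hxM : x ∈ g.cycleType :=
      Multiset.mem_of_mem_erase (Multiset.mem_of_mem_erase hx)
    have hx2 := Equiv.Perm.two_le_of_mem_cycleType hxM
    have hxle : x ≤ R.sum := Multiset.le_sum_of_mem hx
    omega
  have hsum7 : g.cycleType.sum = 7 := by rw [hsum', hR0]; rfl
  have hcard : Multiset.card g.cycleType = 2 := by rw [e1, e2, hR0]; rfl
  have := Equiv.Perm.sign_of_cycleType g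
  rw [hs, hsum7, hcard] at this
  exact absurd this (by decide)

/-- An element of order 10 in `A₅ × C₂`. -/
def auxXA : alternatingGroup (Fin 5) × Multiplicative (ZMod 2) :=
  (⟨finRotate 5, by rw [Equiv.Perm.mem_alternatingGroup]; decide⟩, Multiplicative.ofAdd 1)

lemma auxXA_spec : auxXA ^ 10 = 1 ∧ auxXA ^ 2 ≠ 1 ∧ auxXA ^ 5 ≠ 1 := by decide

/-- An element of order 10 in `SL₂(F₅)`. -/
def auxXS : Matrix.SpecialLinearGroup (Fin 2) (ZMod 5) :=
  ⟨!![4, 4; 0, 4], by decide⟩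

instance : DecidableEq (Matrix.SpecialLinearGroup (Fin 2) (ZMod 5)) :=
  fun a b => decidable_of_iff _ Subtype.ext_iff.symm

lemma auxXS_spec : auxXS ^ 10 = 1 ∧ auxXS ^ 2 ≠ 1 ∧ auxXS ^ 5 ≠ 1 := by decide

/-- Generic argument: if `H` has an element of order 10, no subgroup of `A₈` is
isomorphic to `H`. -/
lemma aux_main {H : Type*} [Group H] (x : H)
    (hx10 : x ^ 10 = 1) (hx2 : x ^ 2 ≠ 1) (hx5 : x ^ 5 ≠ 1)
    (S : Subgroup (alternatingGroup (Fin 8))) (e : S ≃* H) : False := by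
  set y : S := e.symm x with hy
  set g : Equiv.Perm (Fin 8) := ((y : alternatingGroup (Fin 8)) : Equiv.Perm (Fin 8)) with hg
  have key : ∀ n : ℕ, g ^ n = 1 ↔ x ^ n = 1 := by
    intro n
    rw [hg, aux_coe_pow_eq_one, aux_coe_pow_eq_one, hy, aux_pow_transfer]
  have hsign : Equiv.Perm.sign g = 1 :=
    Equiv.Perm.mem_alternatingGroup.mp (y : alternatingGroup (Fin 8)).2
  exact aux_no_order_ten g hsign ((key 10).mpr hx10)
    (fun h => hx2 ((key 2).mp h)) (fun h => hx5 ((key 5).mp h))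

/-- `A₈` contains no subgroup isomorphic to `A₅ × C₂` and none isomorphic to `SL₂(F₅)`. -/
theorem stmt_7 :
    (∀ S : Subgroup (alternatingGroup (Fin 8)),
      ¬ Nonempty (S ≃* (alternatingGroup (Fin 5) × Multiplicative (ZMod 2)))) ∧
    (∀ S : Subgroup (alternatingGroup (Fin 8)),
      ¬ Nonempty (S ≃* Matrix.SpecialLinearGroup (Fin 2) (ZMod 5))) := by
  obtain ⟨hA10, hA2, hA5⟩ := auxXA_spec
  obtain ⟨hS10, hS2, hS5⟩ := auxXS_spec
  constructor
  · rintro S ⟨e⟩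
    exact aux_main auxXA hA10 hA2 hA5 S e
  · rintro S ⟨e⟩
    exact aux_main auxXS hS10 hS2 hS5 S e
end

section
/- The group GL_4(F_3) of invertible 4×4 matrices over the field with 3 elements contains no subgroup isomorphic to A_5 × V_4, the direct product of the alternating group on 5 letters with the Klein four-group. -/
/-!
Since `3` has order `4` modulo `5`, the cyclotomic polynomial `Φ₅` is irreducible over `𝔽₃`.
An element `f` of order `5` in `GL₄(𝔽₃)` is therefore annihilated by `Φ₅`, so that every nonzero
vector of `𝔽₃⁴` is cyclic for `f` and, as in Schur's lemma, the centralizer of `f` is a division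
ring. Its only involution is `-1`, whereas `A₅ × V₄` contains an element of order `5` commuting
with two distinct involutions.
-/

open Polynomial Module

theorem irreducible_cyclotomic_five_zmod_three : Irreducible (cyclotomic 5 (ZMod 3)) := by
  refine ZMod.irreducible_of_dvd_cyclotomic_of_natDegree (p := 3) (by norm_num) dvd_rfl ?_
  rw [natDegree_cyclotomic, Nat.totient_prime (by norm_num), eq_comm, orderOf_eq_iff (by norm_num)]
  decide

section
variable {K V : Type*} [Field K] [AddCommGroup V] [Module K V] [FiniteDimensional K V]
  {f : End K V} {p : K[X]}

theorem exists_aeval_apply_eq_of_irreducible (hp : Irreducible p) (hpf : aeval f p = 0)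
    (hdim : finrank K V ≤ p.natDegree) {w : V} (hw : w ≠ 0) (v : V) :
    ∃ q : K[X], aeval f q w = v := by
  let L : degreeLT K p.natDegree →ₗ[K] V :=
    (LinearMap.applyₗ w).comp ((aeval f).toLinearMap.comp (degreeLT K p.natDegree).subtype)
  have hL : Function.Injective L := by
    refine (injective_iff_map_eq_zero L).2 fun ⟨q, hq⟩ hqw => Subtype.ext ?_
    by_contra hq0
    have hndvd : ¬ p ∣ q := fun hdvd =>
      (natDegree_lt_iff_degree_lt hq0).2 (mem_degreeLT.1 hq) |>.not_ge
        (natDegree_le_of_dvd hdvd hq0)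
    obtain ⟨a, b, hab⟩ := hp.coprime_iff_not_dvd.2 hndvd
    apply hw
    calc w = aeval f (a * p + b * q) w := by simp [hab]
      _ = 0 := by simp [hpf, show aeval f q w = 0 from hqw]
  have hsurj : Function.Surjective L := by
    refine (LinearMap.injective_iff_surjective_of_finrank_eq_finrank ?_).1 hL
    have := LinearMap.finrank_le_finrank_of_injective hL
    simp only [(degreeLTEquiv K p.natDegree).finrank_eq, finrank_fin_fun] at this ⊢
    omega
  obtain ⟨⟨q, _⟩, hq⟩ := hsurj v
  exact ⟨q, hq⟩

theorem eq_zero_or_injective_of_commute (hp : Irreducible p) (hpf : aeval f p = 0)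
    (hdim : finrank K V ≤ p.natDegree) {g : End K V} (hfg : Commute f g) :
    g = 0 ∨ Function.Injective g := by
  refine or_iff_not_imp_right.2 fun hg => ?_
  obtain ⟨w, hgw, hw⟩ : ∃ w, g w = 0 ∧ w ≠ 0 := by
    simpa [injective_iff_map_eq_zero] using hg
  ext v
  obtain ⟨q, rfl⟩ := exists_aeval_apply_eq_of_irreducible hp hpf hdim hw v
  have hcomm : Commute g (aeval f q) :=
    Algebra.commute_of_mem_adjoin_singleton_of_commute (aeval_mem_adjoin_singleton K f) hfg.symm
  rw [LinearMap.zero_apply, ← Module.End.mul_apply, hcomm.eq, Module.End.mul_apply, hgw, map_zero]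

theorem eq_one_or_eq_neg_one_of_commute (hp : Irreducible p) (hpf : aeval f p = 0)
    (hdim : finrank K V ≤ p.natDegree) {g : End K V} (hfg : Commute f g) (hg : g * g = 1) :
    g = 1 ∨ g = -1 := by
  rcases eq_zero_or_injective_of_commute hp hpf hdim (hfg.sub_right (Commute.one_right f)) with
    h | h
  · exact .inl (sub_eq_zero.1 h)
  · refine .inr (eq_neg_of_add_eq_zero_left ?_)
    ext v
    apply h
    have : (g - 1) * (g + 1) = 0 := by simp [mul_add, sub_mul, hg]
    simpa using congr($this v)

theorem aeval_cyclotomic_eq_zero {n : ℕ} [Fact n.Prime] (hirr : Irreducible (cyclotomic n K))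
    (hdim : finrank K V < n) (hf : f ^ n = 1) (hf1 : f ≠ 1) : aeval f (cyclotomic n K) = 0 := by
  have hdvd : minpoly K f ∣ cyclotomic n K * (X - 1) := by
    rw [cyclotomic_prime_mul_X_sub_one, minpoly.dvd_iff]
    simp [hf]
  by_cases hΦ : cyclotomic n K ∣ minpoly K f
  · have hdeg : (minpoly K f).natDegree ≤ (cyclotomic n K).natDegree := by
      have := natDegree_le_of_dvd (LinearMap.minpoly_dvd_charpoly f)
        (LinearMap.charpoly_monic f).ne_zero
      rw [LinearMap.charpoly_natDegree] at this
      rw [natDegree_cyclotomic, Nat.totient_prime Fact.out]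
      omega
    rw [← eq_of_monic_of_dvd_of_natDegree_le (cyclotomic.monic n K)
      (minpoly.monic (Algebra.IsIntegral.isIntegral f)) hΦ hdeg]
    exact minpoly.aeval K f
  · have hX : aeval f (X - 1 : K[X]) = 0 :=
      minpoly.dvd_iff.1 ((hirr.coprime_iff_not_dvd.2 hΦ).symm.dvd_of_dvd_mul_left hdvd)
    exact absurd (sub_eq_zero.1 (by simpa using hX)) hf1
end

theorem eq_neg_one_of_commute_of_pow_five_eq_one {V : Type*} [AddCommGroup V] [Module (ZMod 3) V]
    (hV : finrank (ZMod 3) V = 4) {f g : End (ZMod 3) V} (hf : f ^ 5 = 1) (hf1 : f ≠ 1)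
    (hfg : Commute f g) (hg : g * g = 1) (hg1 : g ≠ 1) : g = -1 := by
  have : FiniteDimensional (ZMod 3) V := .of_finrank_pos (by omega)
  have : Fact (Nat.Prime 5) := ⟨by norm_num⟩
  have hdeg : finrank (ZMod 3) V ≤ (cyclotomic 5 (ZMod 3)).natDegree := by
    rw [natDegree_cyclotomic, Nat.totient_prime Fact.out, hV]
  have hΦ := aeval_cyclotomic_eq_zero irreducible_cyclotomic_five_zmod_three (by omega) hf hf1
  exact (eq_one_or_eq_neg_one_of_commute irreducible_cyclotomic_five_zmod_three hΦ hdeg hfg hg)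
    |>.resolve_left hg1

theorem prod_kleinFour_not_injective_of_pow_five_eq_one {G V : Type*} [Group G] [AddCommGroup V]
    [Module (ZMod 3) V] (hV : finrank (ZMod 3) V = 4) {σ : G} (hσ : σ ^ 5 = 1) (hσ1 : σ ≠ 1)
    (φ : G × (Multiplicative (ZMod 2) × Multiplicative (ZMod 2)) →* End (ZMod 3) V) :
    ¬ Function.Injective φ := by
  intro hφ
  let t : Multiplicative (ZMod 2) := .ofAdd 1
  have ht : t * t = 1 := by decide
  have ht1 : t ≠ 1 := by decide
  have hφ5 : φ (σ, 1) ^ 5 = 1 := by rw [← map_pow, Prod.pow_mk, hσ, one_pow]; exact map_one φ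
  have hφ1 : φ (σ, 1) ≠ 1 := by
    rw [← map_one φ, hφ.ne_iff]; simpa using hσ1
  have hφ_neg_one : ∀ x : Multiplicative (ZMod 2) × Multiplicative (ZMod 2), x * x = 1 → x ≠ 1 →
      φ (1, x) = -1 := fun x hx hx1 =>
    eq_neg_one_of_commute_of_pow_five_eq_one hV hφ5 hφ1
      ((Commute.prod (Commute.one_right σ) (Commute.one_left x)).map φ)
      (by rw [← map_mul, Prod.mk_mul_mk, one_mul, hx]; exact map_one φ)
      (by rw [← map_one φ, hφ.ne_iff]; simpa using hx1)
  have := hφ ((hφ_neg_one (t, 1) (by simp [ht]) (by simpa using ht1)).trans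
    (hφ_neg_one (1, t) (by simp [ht]) (by simpa using ht1)).symm)
  simp [ht1] at this

/-- `GL₄(F₃)` contains no subgroup isomorphic to `A₅ × V₄`. -/
theorem stmt_10 (H : Subgroup (Matrix.GeneralLinearGroup (Fin 4) (ZMod 3))) :
    ¬ Nonempty (H ≃*
      (alternatingGroup (Fin 5) × (Multiplicative (ZMod 2) × Multiplicative (ZMod 2)))) := by
  rintro ⟨e⟩
  let σ : alternatingGroup (Fin 5) :=
    ⟨finRotate 5, Equiv.Perm.finRotate_bit1_mem_alternatingGroup (n := 2)⟩
  let φ := Matrix.toLinAlgEquiv'.toMonoidHom.comp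
    ((Units.coeHom _).comp (H.subtype.comp e.symm.toMonoidHom))
  refine prod_kleinFour_not_injective_of_pow_five_eq_one (by simp) (σ := σ) (by decide)
    (by decide) φ ?_
  exact Matrix.toLinAlgEquiv'.injective.comp (Units.val_injective.comp
    (H.subtype_injective.comp e.symm.injective))
end

section
/- The group GL_3(F_5) of invertible 3×3 matrices over the field with 5 elements contains no subgroup isomorphic to A_5 × V_4, the direct product of the alternating group on 5 letters with the Klein four-group. -/
/-!
`A₅ × V₄` contains the elementary abelian group `(ℤ/2)⁴` (a Klein four-subgroup of `A₅` times
`V₄`), while `GL₃(F₅)` has `2`-rank at most `3`. For a representation `ρ` of `(ℤ/2)ᵏ` on `V`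
over a field with `2 ≠ 0`, the Walsh–Fourier projections `P e = 2⁻ᵏ ∑ᵥ (-1)^(e ⬝ v) ρ v` form a
complete family of orthogonal idempotents, so at most `dim V` of them are nonzero, and
`ρ v = ∑ₑ (-1)^(e ⬝ v) P e`. Hence `ρ` is trivial on the common kernel of the at most `dim V`
characters `e` with `P e ≠ 0`, and faithfulness forces `k ≤ dim V`.
-/

open Module Matrix

lemma OrthogonalIdempotents.card_le_finrank {K V ι : Type*} [DivisionRing K] [AddCommGroup V]
    [Module K V] [FiniteDimensional K V] [Fintype ι] {p : ι → Module.End K V}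
    (hp : OrthogonalIdempotents p) (hp0 : ∀ i, p i ≠ 0) : Fintype.card ι ≤ finrank K V := by
  classical
  choose u hu using fun i ↦ DFunLike.ne_iff.mp (hp0 i)
  refine LinearIndependent.fintype_card_le_finrank (b := fun i ↦ p i (u i)) ?_
  rw [Fintype.linearIndependent_iff]
  intro g hg i
  have hpi : ∀ j, p i (p j (u j)) = if i = j then p i (u i) else 0 := by
    intro j
    rw [← Module.End.mul_apply, hp.mul_eq]
    split_ifs with hij
    · rw [hij]
    · rfl
  have := congrArg (p i) hg
  simp only [map_sum, map_smul, hpi, smul_ite, smul_zero, Finset.sum_ite_eq, Finset.mem_univ,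
    if_true, map_zero] at this
  exact (smul_eq_zero.mp this).resolve_right (hu i)

section Walsh

variable {K : Type*} [Field K] {ι : Type*} [Fintype ι]

variable (K) in
def walshChar (e : ι → ZMod 2) : AddChar (ι → ZMod 2) K where
  toFun v := (-1) ^ (e ⬝ᵥ v).val
  map_zero_eq_one' := by simp
  map_add_eq_mul' v w := by
    rw [dotProduct_add, ZMod.val_add, ← pow_add, ← neg_one_pow_eq_pow_mod_two]

lemma walshChar_apply (e v : ι → ZMod 2) : walshChar K e v = ((-1) ^ (e ⬝ᵥ v).val : K) := rfl

lemma walshChar_comm (e v : ι → ZMod 2) : walshChar K e v = walshChar K v e := by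
  rw [walshChar_apply, walshChar_apply, dotProduct_comm]

lemma walshChar_add_left (e f v : ι → ZMod 2) :
    walshChar K (e + f) v = walshChar K e v * walshChar K f v := by
  rw [walshChar_comm, AddChar.map_add_eq_mul, walshChar_comm, walshChar_comm v]

lemma walshChar_mul_self (e v : ι → ZMod 2) : walshChar K e v * walshChar K e v = 1 := by
  rw [walshChar_apply, ← mul_pow, neg_one_mul, neg_neg, one_pow]

lemma sum_walshChar [DecidableEq ι] (h2 : (2 : K) ≠ 0) (e : ι → ZMod 2) :
    ∑ v, walshChar K e v = if e = 0 then 2 ^ Fintype.card ι else 0 := by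
  split_ifs with he
  · simp [he, walshChar_apply]
  · obtain ⟨i, hi⟩ := Function.ne_iff.mp he
    refine AddChar.sum_eq_zero_of_ne_one (AddChar.ne_one_iff.mpr ⟨Pi.single i 1, ?_⟩)
    have : (e i).val = 1 := by
      have := (ZMod.val_ne_zero (e i)).mpr hi
      have := ZMod.val_lt (e i)
      omega
    rw [walshChar_apply, dotProduct_single, mul_one, this, pow_one]
    intro h
    exact h2 (by linear_combination -h)

end Walsh

section WalshProj

variable {K : Type*} [Field K] {ι : Type*} [Fintype ι] [DecidableEq ι]
  {V : Type*} [AddCommGroup V] [Module K V]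

def walshProj (ρ : Multiplicative (ι → ZMod 2) →* Module.End K V) (e : ι → ZMod 2) :
    Module.End K V :=
  (2 ^ Fintype.card ι : K)⁻¹ • ∑ v, walshChar K e v • ρ (.ofAdd v)

variable (ρ : Multiplicative (ι → ZMod 2) →* Module.End K V)

lemma walshProj_mul_apply (e w : ι → ZMod 2) :
    walshProj ρ e * ρ (.ofAdd w) = walshChar K e w • walshProj ρ e := by
  have hshift : ∑ v, walshChar K e v • ρ (.ofAdd (v + w)) =
      ∑ v, (walshChar K e w * walshChar K e v) • ρ (.ofAdd v) := by
    refine Fintype.sum_equiv (Equiv.addRight w) _ _ fun v ↦ ?_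
    rw [Equiv.coe_addRight, AddChar.map_add_eq_mul, ← mul_assoc, mul_comm (walshChar K e w),
      mul_assoc, walshChar_mul_self, mul_one]
  simp only [walshProj, smul_mul_assoc, Finset.sum_mul, ← map_mul, ← ofAdd_add, hshift, mul_smul,
    ← Finset.smul_sum]
  rw [smul_comm]

lemma walshProj_mul (h2 : (2 : K) ≠ 0) (e f : ι → ZMod 2) :
    walshProj ρ e * walshProj ρ f = if e = f then walshProj ρ e else 0 := by
  have hsum := sum_walshChar h2 (f + e)
  simp only [walshChar_add_left] at hsum
  conv_lhs => arg 2; rw [walshProj]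
  simp only [mul_smul_comm, Finset.mul_sum, walshProj_mul_apply, smul_smul, ← Finset.sum_smul,
    hsum]
  have hfe : f + e = 0 ↔ e = f := by
    rw [add_eq_zero_iff_eq_neg, show -e = e from funext fun i ↦ ZMod.neg_eq_self_mod_two _,
      eq_comm]
  simp only [hfe]
  split_ifs
  · rw [inv_mul_cancel₀ (pow_ne_zero _ h2), one_smul]
  · rw [mul_zero, zero_smul]

lemma sum_walshProj (h2 : (2 : K) ≠ 0) : ∑ e, walshProj ρ e = 1 := by
  have hcol (v : ι → ZMod 2) :
      ∑ e, walshChar K e v = if v = 0 then 2 ^ Fintype.card ι else 0 := by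
    simp_rw [walshChar_comm _ v]
    exact sum_walshChar h2 v
  simp only [walshProj, ← Finset.smul_sum, Finset.sum_comm (γ := ι → ZMod 2), ← Finset.sum_smul,
    hcol, ite_smul, zero_smul, Finset.sum_ite_eq', Finset.mem_univ, if_true, ofAdd_zero, map_one,
    smul_smul, inv_mul_cancel₀ (pow_ne_zero _ h2), one_smul]

lemma sum_walshChar_smul_walshProj (h2 : (2 : K) ≠ 0) (w : ι → ZMod 2) :
    ∑ e, walshChar K e w • walshProj ρ e = ρ (.ofAdd w) := by
  simp_rw [← walshProj_mul_apply, ← Finset.sum_mul, sum_walshProj ρ h2, one_mul]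

lemma completeOrthogonalIdempotents_walshProj (h2 : (2 : K) ≠ 0) :
    CompleteOrthogonalIdempotents (walshProj ρ) :=
  ⟨OrthogonalIdempotents.iff_mul_eq.mpr (walshProj_mul ρ h2), sum_walshProj ρ h2⟩

end WalshProj

theorem card_le_finrank_of_injective_elementaryAbelianTwo {K : Type*} [Field K] {ι : Type*}
    [Fintype ι] {V : Type*} [AddCommGroup V] [Module K V] [FiniteDimensional K V]
    (h2 : (2 : K) ≠ 0) (ρ : Multiplicative (ι → ZMod 2) →* Module.End K V)
    (hρ : Function.Injective ρ) : Fintype.card ι ≤ finrank K V := by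
  classical
  let S := {e // walshProj ρ e ≠ 0}
  have hS : Fintype.card S ≤ finrank K V :=
    ((completeOrthogonalIdempotents_walshProj ρ h2).embedding
      (Function.Embedding.subtype _)).card_le_finrank Subtype.prop
  by_contra! hlt
  have hcard : Fintype.card (S → ZMod 2) < Fintype.card (ι → ZMod 2) := by
    simp only [Fintype.card_fun, ZMod.card]
    exact Nat.pow_lt_pow_right (by norm_num) (hS.trans_lt hlt)
  obtain ⟨v₁, v₂, hne, heq⟩ :=
    Fintype.exists_ne_map_eq_of_card_lt (fun v (e : S) ↦ e.1 ⬝ᵥ v) hcard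
  -- every character with a nonzero projection is trivial at `v₁ - v₂`
  have hv : ρ (.ofAdd (v₁ - v₂)) = 1 := by
    rw [← sum_walshChar_smul_walshProj ρ h2, ← sum_walshProj ρ h2]
    refine Finset.sum_congr rfl fun e _ ↦ ?_
    by_cases he : walshProj ρ e = 0
    · rw [he, smul_zero]
    · have : e ⬝ᵥ v₁ = e ⬝ᵥ v₂ := congrFun heq ⟨e, he⟩
      rw [walshChar_apply, dotProduct_sub, this, sub_self, ZMod.val_zero, pow_zero, one_smul]
  exact hne (sub_eq_zero.mp (hρ (hv.trans (map_one ρ).symm)))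

open Equiv in
def toAlternatingProdKleinFour : Multiplicative (Fin 4 → ZMod 2) →*
    alternatingGroup (Fin 5) × (Multiplicative (ZMod 2) × Multiplicative (ZMod 2)) where
  toFun v :=
    (⟨swap 0 1 * swap 2 3, Perm.mem_alternatingGroup.mpr (by decide)⟩ ^ (v.toAdd 0).val *
        ⟨swap 0 2 * swap 1 3, Perm.mem_alternatingGroup.mpr (by decide)⟩ ^ (v.toAdd 1).val,
      .ofAdd (v.toAdd 2), .ofAdd (v.toAdd 3))
  map_one' := by decide
  map_mul' := by decide

lemma toAlternatingProdKleinFour_injective : Function.Injective toAlternatingProdKleinFour := by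
  decide

/-- `GL₃(F₅)` contains no subgroup isomorphic to `A₅ × V₄`. -/
theorem stmt_13 (H : Subgroup (Matrix.GeneralLinearGroup (Fin 3) (ZMod 5))) :
    ¬ Nonempty (H ≃*
      (alternatingGroup (Fin 5) × (Multiplicative (ZMod 2) × Multiplicative (ZMod 2)))) := by
  rintro ⟨φ⟩
  have h2 : (2 : ZMod 5) ≠ 0 := by decide
  have : Fact (Nat.Prime 5) := ⟨Nat.prime_five⟩
  let ρ : Multiplicative (Fin 4 → ZMod 2) →* Module.End (ZMod 5) (Fin 3 → ZMod 5) :=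
    (Matrix.toLinAlgEquiv' : Matrix (Fin 3) (Fin 3) (ZMod 5) ≃ₐ[ZMod 5] _).toMonoidHom.comp <|
      (Units.coeHom _).comp <| H.subtype.comp <| φ.symm.toMonoidHom.comp toAlternatingProdKleinFour
  have hρ : Function.Injective ρ :=
    Matrix.toLinAlgEquiv'.injective.comp <| Units.val_injective.comp <|
      H.subtype_injective.comp <| φ.symm.injective.comp toAlternatingProdKleinFour_injective
  have := card_le_finrank_of_injective_elementaryAbelianTwo h2 ρ hρ
  simp at this
end

section
/- The group GL_5(F_2) of invertible 5×5 matrices over the field with 2 elements contains no subgroup isomorphic to PSL_2(F_8) = SL_2(F_8), the group of 2×2 matrices of determinant 1 over the field with 8 elements. -/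
/-!
`SL₂(F₈)` has an element of order 9: if `t ∈ F₈` is a root of `X³ + X + 1`, the companion matrix
`M` of `X² + tX + 1` has `M³ ≠ 1`, while `M³` has trace `1 = -1` and determinant `1`, so by
Cayley–Hamilton `M⁹ = 1`. `GL₅(F₂)` has none: the minimal polynomial of `g` with `g⁹ = 1` divides
`X⁹ - 1 = (X³ - 1) Φ₉`, and `Φ₉` is irreducible over `F₂` (2 has order 6 modulo 9) of degree
`6 > 5`, so it is coprime to the minimal polynomial and `g³ = 1`.
-/

open Polynomial

section

variable {K ι : Type*} [Field K] [Fintype ι] [DecidableEq ι]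

theorem Matrix.aeval_eq_zero_of_aeval_mul_eq_zero_of_irreducible (A : Matrix ι ι K)
    {p q : K[X]} (hq : Irreducible q) (hcard : Fintype.card ι < q.natDegree)
    (hpq : aeval A (p * q) = 0) : aeval A p = 0 := by
  have hm0 : minpoly K A ≠ 0 := minpoly.ne_zero (Matrix.isIntegral A)
  have hm : (minpoly K A).natDegree ≤ Fintype.card ι :=
    (natDegree_le_of_dvd (Matrix.minpoly_dvd_charpoly A) (Matrix.charpoly_monic A).ne_zero).trans
      (Matrix.charpoly_natDegree_eq_dim A).le
  have hcop : IsCoprime q (minpoly K A) :=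
    (hq.coprime_iff_not_dvd).mpr fun h => by
      have := natDegree_le_of_dvd h hm0; omega
  obtain ⟨c, hc⟩ := hcop.symm.dvd_of_dvd_mul_right (minpoly.dvd K A hpq)
  rw [hc, map_mul, minpoly.aeval, zero_mul]

theorem Matrix.pow_eq_one_of_pow_prime_pow_succ_eq_one {p k : ℕ} [Fact p.Prime]
    (hirr : Irreducible (cyclotomic (p ^ (k + 1)) K))
    (hcard : Fintype.card ι < (p ^ (k + 1)).totient) {A : Matrix ι ι K}
    (hA : A ^ p ^ (k + 1) = 1) : A ^ p ^ k = 1 := by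
  have h : aeval A ((X ^ p ^ k - 1) * cyclotomic (p ^ (k + 1)) K) = 0 := by
    rw [mul_comm, cyclotomic_prime_pow_mul_X_pow_sub_one]; simp [hA]
  simpa [sub_eq_zero] using
    A.aeval_eq_zero_of_aeval_mul_eq_zero_of_irreducible hirr (by rwa [natDegree_cyclotomic]) h

theorem Matrix.GeneralLinearGroup.pow_eq_one_of_pow_prime_pow_succ_eq_one {p k : ℕ}
    [Fact p.Prime] (hirr : Irreducible (cyclotomic (p ^ (k + 1)) K))
    (hcard : Fintype.card ι < (p ^ (k + 1)).totient) {g : GL ι K} (hg : g ^ p ^ (k + 1) = 1) :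
    g ^ p ^ k = 1 :=
  Units.ext <| by
    simpa using Matrix.pow_eq_one_of_pow_prime_pow_succ_eq_one hirr hcard
      (by simpa using congrArg Units.val hg)

end

theorem irreducible_cyclotomic_nine_zmod_two : Irreducible (cyclotomic 9 (ZMod 2)) :=
  ZMod.irreducible_of_dvd_cyclotomic_of_natDegree (by decide) dvd_rfl <| by
    rw [natDegree_cyclotomic, eq_comm, orderOf_eq_iff (by decide)]
    decide

theorem Matrix.GeneralLinearGroup.orderOf_ne_nine (g : GL (Fin 5) (ZMod 2)) : orderOf g ≠ 9 := by
  intro hg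
  have h9 : g ^ 3 ^ (1 + 1) = 1 := by
    rw [show 3 ^ (1 + 1) = orderOf g by rw [hg]; rfl, pow_orderOf_eq_one]
  have h3 : g ^ 3 ^ 1 = 1 :=
    pow_eq_one_of_pow_prime_pow_succ_eq_one irreducible_cyclotomic_nine_zmod_two (by decide) h9
  have := orderOf_le_of_pow_eq_one (by norm_num) h3
  omega

theorem GaloisField.exists_aeval_eq_zero_of_dvd {p n : ℕ} [Fact p.Prime] (hn : n ≠ 0)
    {f : (ZMod p)[X]} (hf : f ∣ X ^ p ^ n - X) (hdeg : f.degree ≠ 0) :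
    ∃ t : GaloisField p n, aeval t f = 0 := by
  have hne : (X ^ p ^ n - X : (ZMod p)[X]) ≠ 0 :=
    FiniteField.X_pow_card_pow_sub_X_ne_zero _ hn (Fact.out : p.Prime).one_lt
  have hsplit : (f.map (algebraMap (ZMod p) (GaloisField p n))).Splits :=
    (SplittingField.splits (X ^ p ^ n - X : (ZMod p)[X])).of_dvd (Polynomial.map_ne_zero hne)
      (Polynomial.map_dvd _ hf)
  obtain ⟨t, ht⟩ := hsplit.exists_eval_eq_zero (by rwa [degree_map])
  exact ⟨t, by rwa [aeval_def, eval₂_eq_eval_map]⟩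

theorem GaloisField.exists_root_X_pow_three_add_X_add_one :
    ∃ t : GaloisField 2 3, t ^ 3 + t + 1 = 0 := by
  have hdvd : (X ^ 3 + X + 1 : (ZMod 2)[X]) ∣ X ^ 2 ^ 3 - X :=
    ⟨X ^ 5 + X ^ 3 + X ^ 2 + X, by
      linear_combination (-(X ^ 6 + X ^ 5 + X ^ 4 + X ^ 3 + X ^ 2 + X) : (ZMod 2)[X]) *
        (CharTwo.two_eq_zero : (2 : (ZMod 2)[X]) = 0)⟩
  obtain ⟨t, ht⟩ := exists_aeval_eq_zero_of_dvd (by decide) hdvd (by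
    rw [show (X ^ 3 + X + 1 : (ZMod 2)[X]).degree = 3 by compute_degree!]; decide)
  exact ⟨t, by simpa using ht⟩

theorem Matrix.pow_three_eq_one_of_trace_eq_neg_one {R : Type*} [CommRing R] [Nontrivial R]
    {N : Matrix (Fin 2) (Fin 2) R} (htr : N.trace = -1) (hdet : N.det = 1) : N ^ 3 = 1 := by
  have hCH : N ^ 2 + N + 1 = 0 := by
    simpa [charpoly_fin_two, htr, hdet, sub_eq_add_neg] using N.aeval_self_charpoly
  calc N ^ 3 = (N - 1) * (N ^ 2 + N + 1) + 1 := by noncomm_ring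
    _ = 1 := by rw [hCH, mul_zero, zero_add]

theorem Matrix.SpecialLinearGroup.exists_orderOf_eq_nine :
    ∃ M : SpecialLinearGroup (Fin 2) (GaloisField 2 3), orderOf M = 9 := by
  obtain ⟨t, ht⟩ := GaloisField.exists_root_X_pow_three_add_X_add_one
  have h2 : (2 : GaloisField 2 3) = 0 := CharTwo.two_eq_zero
  set A : Matrix (Fin 2) (Fin 2) (GaloisField 2 3) := !![0, 1; 1, t]
  have hdet : A.det = 1 := by
    rw [det_fin_two_of]; linear_combination -h2
  have hA3 : A ^ 3 = !![t, t ^ 2 + 1; t ^ 2 + 1, t + 1] := by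
    rw [pow_three, mul_fin_two, mul_fin_two]
    simp only [EmbeddingLike.apply_eq_iff_eq, vecCons_inj, and_true]
    exact ⟨⟨by ring, by ring⟩, by ring, by linear_combination ht - h2⟩
  let M : SpecialLinearGroup (Fin 2) (GaloisField 2 3) := ⟨A, hdet⟩
  have hM3 : ((M ^ 3 : SpecialLinearGroup (Fin 2) _) : Matrix (Fin 2) (Fin 2) _) =
      !![t, t ^ 2 + 1; t ^ 2 + 1, t + 1] := by
    rw [coe_pow]; exact hA3
  have hM9 : M ^ 3 ^ (1 + 1) = 1 := by
    rw [pow_succ, pow_one, pow_mul]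
    refine Subtype.ext ?_
    rw [coe_pow, coe_one]
    refine pow_three_eq_one_of_trace_eq_neg_one ?_ (M ^ 3).det_coe
    rw [hM3, trace_fin_two_of]
    linear_combination (t + 1) * h2
  have hM3_ne : ¬ M ^ 3 ^ 1 = 1 := by
    intro h
    have h01 : t ^ 2 + 1 = 0 := by
      simpa [hM3] using congrFun (congrFun (congrArg Subtype.val h) 0) 1
    have ht1 : t + 1 = 0 := pow_eq_zero_iff two_ne_zero |>.mp <| by
      linear_combination h01 + t * h2
    have : (1 : GaloisField 2 3) = 0 := by linear_combination (t ^ 2 - t + 2) * ht1 - ht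
    exact one_ne_zero this
  exact ⟨M, orderOf_eq_prime_pow hM3_ne hM9⟩

/-- `GL₅(F₂)` contains no subgroup isomorphic to `PSL₂(F₈) = SL₂(F₈)`. -/
theorem stmt_14 (H : Subgroup (Matrix.GeneralLinearGroup (Fin 5) (ZMod 2))) :
    ¬ Nonempty (H ≃* Matrix.SpecialLinearGroup (Fin 2) (GaloisField 2 3)) := by
  rintro ⟨e⟩
  obtain ⟨M, hM⟩ := Matrix.SpecialLinearGroup.exists_orderOf_eq_nine
  refine Matrix.GeneralLinearGroup.orderOf_ne_nine (e.symm M) ?_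
  rw [Subgroup.orderOf_coe, MulEquiv.orderOf_eq, hM]
end

section
/- Let H be any subgroup of GL_6(F_2) that is isomorphic to PSL_2(F_8) = SL_2(F_8). Then every element of H of order 7 acts fixed-point-freely on (F_2)^6, i.e. the only vector of (F_2)^6 fixed by such an element is the zero vector. -/
/-!
Over `𝔽₂` one has `X⁷ - 1 = (X - 1)(X³ + X + 1)(X³ + X² + 1)` with pairwise coprime factors, so
for `g` of order `7` the space `𝔽₂⁶` splits as `ker (g - 1) ⊕ K₁ ⊕ K₂`, where `Kᵢ` is the kernel of
the `i`-th cubic evaluated at `g`. The two cubics are reciprocal to each other, so `K₁` for `g⁻¹` is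
`K₂` for `g`. In `SL₂(𝔽₈)` (indeed in `SL₂(K)` for any field of characteristic `2`) every element
is conjugate to its inverse, hence `dim K₁ = dim K₂`. As `g ≠ 1`, they are nonzero, so each has
dimension at least `3` by irreducibility of the cubics, which leaves no room for `ker (g - 1)`.
-/

open Polynomial Module LinearMap

theorem Matrix.exists_det_eq_one_mul_eq_adjugate_mul_of_charTwo {K : Type*} [Field K] [CharP K 2]
    (x : Matrix (Fin 2) (Fin 2) K) : ∃ m : Matrix (Fin 2) (Fin 2) K,
      m.det = 1 ∧ m * x = x.adjugate * m := by
  rw [eta_fin_two x, adjugate_fin_two_of]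
  generalize x 0 0 = a, x 0 1 = b, x 1 0 = c, x 1 1 = d
  rcases eq_or_ne c 0 with hc | hc
  · rcases eq_or_ne b 0 with hb | hb
    · refine ⟨!![0, 1; 1, 0], by rw [det_fin_two_of]; grind, ?_⟩
      simp [hb, hc]
    · refine ⟨!![1, 0; (a + d) / b, 1], by simp, ?_⟩
      rw [mul_fin_two, mul_fin_two]
      congr! 3 <;> grind
  · refine ⟨!![1, (a + d) / c; 0, 1], by simp, ?_⟩
    rw [mul_fin_two, mul_fin_two]
    congr! 3 <;> grind

theorem Matrix.SpecialLinearGroup.isConj_inv_of_charTwo {K : Type*} [Field K] [CharP K 2]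
    (x : SpecialLinearGroup (Fin 2) K) : IsConj x x⁻¹ := by
  obtain ⟨m, hdet, hm⟩ :=
    exists_det_eq_one_mul_eq_adjugate_mul_of_charTwo (x : Matrix (Fin 2) (Fin 2) K)
  let M : SpecialLinearGroup (Fin 2) K := ⟨m, hdet⟩
  exact isConj_iff.2 ⟨M, mul_inv_eq_iff_eq_mul.2 (Subtype.ext hm)⟩

section CommRing

variable {R M : Type*} [CommRing R] [AddCommGroup M] [Module R M]

theorem Module.End.aeval_restrict_apply (f : Module.End R M) {p : Submodule R M}
    (hp : ∀ x ∈ p, f x ∈ p) (q : R[X]) (x : p) :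
    (aeval (f.restrict hp) q x : M) = aeval f q x := by
  induction q using Polynomial.induction_on' with
  | add q r hq hr => simp [hq, hr]
  | monomial n a =>
    simp only [aeval_monomial, Module.End.mul_apply, Module.algebraMap_end_apply,
      Submodule.coe_smul]
    rw [Module.End.pow_restrict]
    rfl

theorem Polynomial.mapsTo_ker_aeval (f : Module.End R M) (q : R[X]) :
    ∀ x ∈ ker (aeval f q), f x ∈ ker (aeval f q) := by
  intro x hx
  have hc : Commute f (aeval f q) := by simpa using (commute_X q).map (aeval f)
  rw [mem_ker] at hx ⊢
  rw [← Module.End.mul_apply, ← hc.eq, Module.End.mul_apply, hx, map_zero]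

theorem Module.End.ker_units_mul (v : (Module.End R M)ˣ) (f : Module.End R M) :
    ker ((v : Module.End R M) * f) = ker f := by
  ext x
  simp only [mem_ker, Module.End.mul_apply]
  exact (GeneralLinearGroup.generalLinearEquiv R M v).map_eq_zero_iff

theorem Polynomial.finrank_ker_aeval_of_isConj {u u' : (Module.End R M)ˣ} (h : IsConj u u')
    (p : R[X]) :
    finrank R (ker (aeval (u : Module.End R M) p)) =
      finrank R (ker (aeval (u' : Module.End R M) p)) := by
  obtain ⟨w, rfl⟩ := isConj_iff.1 h
  let e := GeneralLinearGroup.generalLinearEquiv R M w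
  have hconj : aeval ((w * u * w⁻¹ : (Module.End R M)ˣ) : Module.End R M) p
      = w * aeval (u : Module.End R M) p * ↑w⁻¹ := by
    simpa [ConjAct.units_smul_def] using congrArg (· p) <| aeval_algEquiv
      (MulSemiringAction.toAlgEquiv R (Module.End R M) (ConjAct.toConjAct w)) (u : Module.End R M)
  have hker : ker (aeval ((w * u * w⁻¹ : (Module.End R M)ˣ) : Module.End R M) p)
      = (ker (aeval (u : Module.End R M) p)).map (e : M →ₗ[R] M) := by
    ext x
    rw [hconj, Submodule.mem_map_equiv]
    simp only [mem_ker, Module.End.mul_apply]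
    exact e.map_eq_zero_iff
  rw [hker, LinearEquiv.finrank_map_eq]

theorem Units.val_inv_cubic_eq_mul_reciprocal {A : Type*} [Ring A] (u : Aˣ) :
    (↑u⁻¹ : A) ^ 3 + ↑u⁻¹ + 1 = ↑(u⁻¹ ^ 3) * ((u : A) ^ 3 + (u : A) ^ 2 + 1) := by
  have h3 : u⁻¹ ^ 3 * u ^ 3 = 1 := by group
  have h2 : u⁻¹ ^ 3 * u ^ 2 = u⁻¹ := by group
  rw [mul_add, mul_add, mul_one, ← Units.val_pow_eq_pow_val u, ← Units.val_pow_eq_pow_val u,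
    ← Units.val_mul, ← Units.val_mul, h3, h2]
  push_cast
  abel

theorem Polynomial.ker_aeval_inv_cubic (u : (Module.End R M)ˣ) :
    ker (aeval (↑u⁻¹ : Module.End R M) (X ^ 3 + X + 1 : R[X])) =
      ker (aeval (u : Module.End R M) (X ^ 3 + X ^ 2 + 1 : R[X])) := by
  simp only [map_add, map_pow, aeval_X, map_one]
  rw [Units.val_inv_cubic_eq_mul_reciprocal, Module.End.ker_units_mul]

end CommRing

section Field

variable {F V : Type*} [Field F] [AddCommGroup V] [Module F V] [FiniteDimensional F V]

theorem Polynomial.natDegree_le_finrank_ker_aeval (f : Module.End F V) {q : F[X]}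
    (hq : Irreducible q) (hker : ker (aeval f q) ≠ ⊥) :
    q.natDegree ≤ finrank F (ker (aeval f q)) := by
  have : Nontrivial (ker (aeval f q)) := Submodule.nontrivial_iff_ne_bot.mpr hker
  set g := f.restrict (mapsTo_ker_aeval f q)
  have hg : aeval g q = 0 := by
    ext x
    rw [Module.End.aeval_restrict_apply]
    exact x.2
  calc q.natDegree = (minpoly F g).natDegree := by
        rw [← minpoly.eq_of_irreducible hq hg,
          natDegree_mul_C (inv_ne_zero (leadingCoeff_ne_zero.2 hq.ne_zero))]
    _ ≤ g.charpoly.natDegree :=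
        natDegree_le_of_dvd (minpoly_dvd_charpoly g) g.charpoly_monic.ne_zero
    _ = finrank F (ker (aeval f q)) := g.charpoly_natDegree

theorem Polynomial.finrank_ker_aeval_mul_of_isCoprime (f : Module.End F V) {p q : F[X]}
    (hpq : IsCoprime p q) :
    finrank F (ker (aeval f (p * q))) =
      finrank F (ker (aeval f p)) + finrank F (ker (aeval f q)) := by
  have := Submodule.finrank_sup_add_finrank_inf_eq (ker (aeval f p)) (ker (aeval f q))
  rwa [sup_ker_aeval_eq_ker_aeval_mul_of_coprime f hpq,
    (disjoint_ker_aeval_of_isCoprime f hpq).eq_bot, finrank_bot, add_zero] at this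

end Field

namespace ZMod

theorem X_pow_seven_sub_one_eq :
    (X ^ 7 - 1 : (ZMod 2)[X]) = (X - 1) * ((X ^ 3 + X + 1) * (X ^ 3 + X ^ 2 + 1)) := by
  grind

theorem isCoprime_X_sub_one_cubics :
    IsCoprime (X - 1 : (ZMod 2)[X]) ((X ^ 3 + X + 1) * (X ^ 3 + X ^ 2 + 1)) :=
  ⟨X ^ 5 + X ^ 3 + X, 1, by grind⟩

theorem isCoprime_cubics : IsCoprime (X ^ 3 + X + 1 : (ZMod 2)[X]) (X ^ 3 + X ^ 2 + 1) :=
  ⟨X, X + 1, by grind⟩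

theorem irreducible_X_pow_three_add_X_add_one : Irreducible (X ^ 3 + X + 1 : (ZMod 2)[X]) := by
  have hdeg : (X ^ 3 + X + 1 : (ZMod 2)[X]).natDegree = 3 := by compute_degree!
  rw [irreducible_iff_roots_eq_zero_of_degree_le_three (by omega) hdeg.le,
    Multiset.eq_zero_iff_forall_notMem]
  have hroot : ∀ a : ZMod 2, a ^ 3 + a + 1 ≠ 0 := by decide
  intro a ha
  simp only [mem_roots', IsRoot.def, eval_add, eval_pow, eval_X, eval_one] at ha
  exact hroot a ha.2

variable {V : Type*} [AddCommGroup V] [Module (ZMod 2) V] [FiniteDimensional (ZMod 2) V]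

theorem ker_sub_one_eq_bot_of_isConj_inv (hV : finrank (ZMod 2) V ≤ 6)
    (u : (Module.End (ZMod 2) V)ˣ) (hu : orderOf u = 7) (hconj : IsConj u u⁻¹) :
    ker ((u : Module.End (ZMod 2) V) - 1) = ⊥ := by
  have h7 : (u : Module.End (ZMod 2) V) ^ 7 = 1 := by
    rw [← Units.val_pow_eq_pow_val, ← hu, pow_orderOf_eq_one, Units.val_one]
  set f := (u : Module.End (ZMod 2) V)
  have hdim : finrank (ZMod 2) V = finrank (ZMod 2) (ker (f - 1)) +
      (finrank (ZMod 2) (ker (aeval f (X ^ 3 + X + 1 : (ZMod 2)[X]))) +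
        finrank (ZMod 2) (ker (aeval f (X ^ 3 + X ^ 2 + 1 : (ZMod 2)[X])))) := by
    have hX7 : aeval f (X ^ 7 - 1 : (ZMod 2)[X]) = 0 := by simp [h7]
    rw [← show aeval f (X - 1 : (ZMod 2)[X]) = f - 1 by simp,
      ← finrank_ker_aeval_mul_of_isCoprime f isCoprime_cubics,
      ← finrank_ker_aeval_mul_of_isCoprime f isCoprime_X_sub_one_cubics,
      ← X_pow_seven_sub_one_eq, hX7, ker_zero, finrank_top]
  have hsym : finrank (ZMod 2) (ker (aeval f (X ^ 3 + X ^ 2 + 1 : (ZMod 2)[X]))) =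
      finrank (ZMod 2) (ker (aeval f (X ^ 3 + X + 1 : (ZMod 2)[X]))) := by
    rw [← ker_aeval_inv_cubic, finrank_ker_aeval_of_isConj hconj.symm]
  have hne : ker (aeval f (X ^ 3 + X + 1 : (ZMod 2)[X])) ≠ ⊥ := by
    intro hbot
    rw [hsym, hbot, finrank_bot] at hdim
    have : ker (f - 1) = ⊤ := Submodule.eq_top_of_finrank_eq hdim.symm
    have hf : f = 1 := sub_eq_zero.1 (ker_eq_top.1 this)
    rw [show u = 1 from Units.ext hf, orderOf_one] at hu
    omega
  have h3 := natDegree_le_finrank_ker_aeval f irreducible_X_pow_three_add_X_add_one hne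
  rw [show (X ^ 3 + X + 1 : (ZMod 2)[X]).natDegree = 3 by compute_degree!] at h3
  exact Submodule.finrank_eq_zero.1 (by omega)

end ZMod

/-- In any subgroup of `GL₆(F₂)` isomorphic to `PSL₂(F₈)`, every element of order `7`
acts fixed-point-freely on `(F₂)⁶`. -/
theorem stmt_18 (H : Subgroup (Matrix.GeneralLinearGroup (Fin 6) (ZMod 2)))
    (hH : Nonempty (H ≃* Matrix.SpecialLinearGroup (Fin 2) (GaloisField 2 3)))
    (g : Matrix.GeneralLinearGroup (Fin 6) (ZMod 2)) (hg : g ∈ H) (hord : orderOf g = 7)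
    (v : Fin 6 → ZMod 2) (hv : Matrix.mulVec (g : Matrix (Fin 6) (Fin 6) (ZMod 2)) v = v) :
    v = 0 := by
  obtain ⟨e⟩ := hH
  have hconj : IsConj g g⁻¹ := by
    simpa using (H.subtype.comp e.symm.toMonoidHom).map_isConj
      (Matrix.SpecialLinearGroup.isConj_inv_of_charTwo (e ⟨g, hg⟩))
  let toLin := Matrix.GeneralLinearGroup.toLin (n := Fin 6) (R := ZMod 2)
  have hker := ZMod.ker_sub_one_eq_bot_of_isConj_inv (by simp) (toLin g)
    (by rw [MulEquiv.orderOf_eq, hord]) (by simpa using toLin.toMonoidHom.map_isConj hconj)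
  have hv' : v ∈ ker ((toLin g : Module.End (ZMod 2) (Fin 6 → ZMod 2)) - 1) := by
    simp [toLin, Matrix.GeneralLinearGroup.coe_toLin, hv]
  rwa [hker, Submodule.mem_bot] at hv'
end
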